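/- Let Y be a binomial random variable B(n, p) with ζ ≤ p ≤ 1 − ζ for 0 < ζ < 1/2 and n ≥ 1. Then the maximum over k of Pr[Y = k] (the probability at the mode) is at most (e/(2πζ√n))·(1 + 1/(ζn)). -/

import Mathlib

noncomputable def binomProb (n : ℕ) (p : ℝ) (k : ℕ) : ℝ :=
  (n.choose k : ℝ) * p ^ k * (1 - p) ^ (n - k)

/-!
Consecutive terms satisfy `P(k+1) (k+1)(1-p) = P(k) (n-k) p`, so the probabilities increase up to
`M = ⌊(n+1)p⌋` and decrease afterwards. If `M` is `0` or `n`, the largest probability is `(1-p)^n`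
or `p^n`, at most `(1-ζ)^n ≤ e^{-ζn}`, which is already below the bound. Otherwise
`p^M (1-p)^(n-M)` is largest at `p = M/n`, and the Stirling bounds
`√(2πm) (m/e)^m ≤ m! ≤ e √m (m/e)^m` give `C(n,M) (M/n)^M ((n-M)/n)^(n-M) ≤ e √n / (2π √(M(n-M)))`.
Finally `M` and `n - M` are both at least `ζn - 1`, which bounds `√(M(n-M))` below by
`(ζn)² / (ζn + 1)`.
-/

open Real Nat

theorem binomProb_nonneg {p : ℝ} (hp0 : 0 ≤ p) (hp1 : p ≤ 1) (n k : ℕ) :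
    0 ≤ binomProb n p k := by
  have : 0 ≤ 1 - p := by linarith
  unfold binomProb
  positivity

theorem binomProb_zero_right (n : ℕ) (p : ℝ) : binomProb n p 0 = (1 - p) ^ n := by
  simp [binomProb]

theorem binomProb_self (n : ℕ) (p : ℝ) : binomProb n p n = p ^ n := by
  simp [binomProb]

theorem binomProb_succ_mul (n k : ℕ) (p : ℝ) :
    binomProb n p (k + 1) * ((k + 1) * (1 - p)) = binomProb n p k * ((n - k) * p) := by
  unfold binomProb
  rcases lt_or_ge k n with hk | hk
  · have hchoose : (n.choose (k + 1) : ℝ) * (k + 1) = n.choose k * (n - k) := by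
      rw [← Nat.cast_sub hk.le]; exact_mod_cast Nat.choose_succ_right_eq n k
    obtain ⟨m, rfl⟩ : ∃ m, n = k + 1 + m := ⟨n - (k + 1), by omega⟩
    rw [show k + 1 + m - k = m + 1 by omega, show k + 1 + m - (k + 1) = m by omega]
    linear_combination p ^ (k + 1) * (1 - p) ^ (m + 1) * hchoose
  · rcases hk.eq_or_lt with rfl | hk
    · simp
    · simp [Nat.choose_eq_zero_of_lt hk, Nat.choose_eq_zero_of_lt (hk.trans (Nat.lt_succ_self k))]

section Mode

variable {n : ℕ} {p : ℝ}

theorem binomProb_le_succ (hp0 : 0 ≤ p) (hp1 : p < 1) {k : ℕ} (hk : k + 1 ≤ (n + 1) * p) :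
    binomProb n p k ≤ binomProb n p (k + 1) := by
  have hr : 0 < (k + 1) * (1 - p) := mul_pos (by positivity) (by linarith)
  refine le_of_mul_le_mul_right ?_ hr
  calc binomProb n p k * ((k + 1) * (1 - p)) ≤ binomProb n p k * ((n - k) * p) :=
        mul_le_mul_of_nonneg_left (by linarith) (binomProb_nonneg hp0 hp1.le n k)
    _ = _ := (binomProb_succ_mul n k p).symm

theorem binomProb_succ_le (hp0 : 0 ≤ p) (hp1 : p < 1) {k : ℕ} (hk : (n + 1) * p ≤ k + 1) :
    binomProb n p (k + 1) ≤ binomProb n p k := by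
  have hr : 0 < (k + 1) * (1 - p) := mul_pos (by positivity) (by linarith)
  refine le_of_mul_le_mul_right ?_ hr
  calc binomProb n p (k + 1) * ((k + 1) * (1 - p)) = binomProb n p k * ((n - k) * p) :=
        binomProb_succ_mul n k p
    _ ≤ binomProb n p k * ((k + 1) * (1 - p)) :=
        mul_le_mul_of_nonneg_left (by linarith) (binomProb_nonneg hp0 hp1.le n k)

theorem binomProb_le_binomProb_floor (hp0 : 0 ≤ p) (hp1 : p < 1) (k : ℕ) :
    binomProb n p k ≤ binomProb n p ⌊(n + 1) * p⌋₊ := by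
  set M := ⌊(n + 1) * p⌋₊
  have hM : (M : ℝ) ≤ (n + 1) * p := Nat.floor_le (by positivity)
  have hM' : (n + 1) * p < M + 1 := Nat.lt_floor_add_one _
  rcases le_total k M with hkM | hMk
  · refine monotoneOn_of_le_succ Set.ordConnected_Iic (fun j _ _ hj => ?_)
      hkM (Set.mem_Iic.2 le_rfl) hkM
    rw [Order.succ_eq_add_one, Set.mem_Iic] at hj
    exact binomProb_le_succ hp0 hp1 (le_trans (by exact_mod_cast hj) hM)
  · refine antitoneOn_of_succ_le Set.ordConnected_Ici (fun j _ hj _ => ?_)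
      (Set.mem_Ici.2 le_rfl) hMk hMk
    rw [Order.succ_eq_add_one]
    have : (M : ℝ) ≤ j := by exact_mod_cast hj
    exact binomProb_succ_le hp0 hp1 (by linarith)

end Mode

theorem factorial_le_exp_one_mul_sqrt {n : ℕ} (hn : n ≠ 0) :
    (n ! : ℝ) ≤ exp 1 * √n * (n / exp 1) ^ n := by
  have hseq : Stirling.stirlingSeq n ≤ exp 1 / √2 := by
    obtain ⟨m, rfl⟩ := Nat.exists_eq_succ_of_ne_zero hn
    simpa using Stirling.stirlingSeq'_antitone (Nat.zero_le m)
  have hpos : 0 < √(2 * n : ℝ) * (n / exp 1) ^ n := by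
    have : (0 : ℝ) < n := by exact_mod_cast Nat.pos_of_ne_zero hn
    positivity
  rw [Stirling.stirlingSeq, div_le_iff₀ hpos] at hseq
  calc (n ! : ℝ) ≤ exp 1 / √2 * (√(2 * n : ℝ) * (n / exp 1) ^ n) := hseq
    _ = exp 1 * √n * (n / exp 1) ^ n := by
      rw [Real.sqrt_mul zero_le_two]; field_simp

theorem pow_le_exp_mul_sub_one {u : ℝ} (hu : 0 ≤ u) (a : ℕ) : u ^ a ≤ exp (a * (u - 1)) := by
  calc u ^ a ≤ exp (u - 1) ^ a := by
        gcongr; linarith [add_one_le_exp (u - 1)]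
    _ = exp (a * (u - 1)) := (exp_nat_mul _ a).symm

theorem pow_mul_one_sub_pow_le {p : ℝ} (hp0 : 0 ≤ p) (hp1 : p ≤ 1) {a b : ℕ} (ha : 0 < a)
    (hb : 0 < b) :
    p ^ a * (1 - p) ^ b ≤ (a / (a + b) : ℝ) ^ a * (b / (a + b) : ℝ) ^ b := by
  set x : ℝ := a / (a + b)
  set y : ℝ := b / (a + b)
  have hx : 0 < x := by positivity
  have hy : 0 < y := by positivity
  have hsum : a * (p / x - 1) + b * ((1 - p) / y - 1) = 0 := by
    simp only [x, y]; field_simp; ring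
  clear_value x y
  calc p ^ a * (1 - p) ^ b = x ^ a * y ^ b * ((p / x) ^ a * ((1 - p) / y) ^ b) := by
        rw [div_pow, div_pow]; field_simp
    _ ≤ x ^ a * y ^ b * (exp (a * (p / x - 1)) * exp (b * ((1 - p) / y - 1))) := by
        gcongr
        · exact pow_le_exp_mul_sub_one (by positivity) a
        · exact pow_le_exp_mul_sub_one (div_nonneg (by linarith) hy.le) b
    _ = x ^ a * y ^ b := by rw [← exp_add, hsum, exp_zero, mul_one]

theorem choose_mul_pow_mul_pow_le {a b : ℕ} (ha : 0 < a) (hb : 0 < b) :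
    ((a + b).choose a : ℝ) * ((a / (a + b) : ℝ) ^ a * (b / (a + b) : ℝ) ^ b) ≤
      exp 1 * √(a + b) / (2 * π * √(a * b)) := by
  set C : ℝ := ((a + b).choose a : ℝ)
  set X : ℝ := (a / (a + b) : ℝ) ^ a * (b / (a + b) : ℝ) ^ b
  set D : ℝ := (a / exp 1) ^ a * (b / exp 1) ^ b
  have hD : 0 < D := by positivity
  have hX : ((a + b : ℝ) / exp 1) ^ (a + b) * X = D := by
    have : (0 : ℝ) < a + b := by positivity
    simp only [X, D, pow_add, div_pow]
    field_simp
  have hsqrt : √(2 * π * a) * √(2 * π * b) = 2 * π * √(a * b) := by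
    rw [← Real.sqrt_mul (by positivity),
      show 2 * π * a * (2 * π * b) = (2 * π) ^ 2 * (a * b) by ring, Real.sqrt_mul (by positivity),
      Real.sqrt_sq (by positivity)]
  have hfact : C * (a ! * b !) = ((a + b) ! : ℕ) := by
    rw [← Nat.add_choose_mul_factorial_mul_factorial, ← Nat.choose_symm_add]
    push_cast; ring
  have key : C * X * (2 * π * √(a * b)) * D ≤ exp 1 * √(a + b) * D :=
    calc C * X * (2 * π * √(a * b)) * D
        = C * X * ((√(2 * π * a) * (a / exp 1) ^ a) * (√(2 * π * b) * (b / exp 1) ^ b)) := by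
          rw [← hsqrt]; ring
      _ ≤ C * X * (a ! * b !) := by
          gcongr <;> exact Stirling.le_factorial_stirling _
      _ = ((a + b) ! : ℕ) * X := by rw [← hfact]; ring
      _ ≤ exp 1 * √(a + b) * ((a + b : ℝ) / exp 1) ^ (a + b) * X := by
          gcongr
          exact_mod_cast factorial_le_exp_one_mul_sqrt (n := a + b) (by omega)
      _ = exp 1 * √(a + b) * D := by rw [mul_assoc, hX]
  rw [le_div_iff₀ (by positivity)]
  exact le_of_mul_le_mul_right key hD

theorem sq_le_sqrt_mul_mul_add_one {t a b : ℝ} (ht : 0 < t) (hab : 2 * t ≤ a + b) (ha : 1 ≤ a)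
    (hb : 1 ≤ b) (hta : t - 1 ≤ a) (htb : t - 1 ≤ b) : t ^ 2 ≤ √(a * b) * (t + 1) := by
  have hquartic : t ^ 4 ≤ a * b * (t + 1) ^ 2 := by
    rcases le_or_gt (t ^ 2) (t + 1) with hsmall | hlarge
    · have : 1 ≤ a * b := by nlinarith
      nlinarith [mul_le_mul hsmall hsmall (sq_nonneg t) (by linarith)]
    · -- here `t > 1`, and `(t ^ 2 - 1) * (t + 1) ^ 2 ≥ t ^ 4` since `t ^ 2 > t + 1`
      have hab' : (t - 1) * (t + 1) ≤ a * b := by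
        nlinarith [mul_nonneg (sub_nonneg.2 hta) (sub_nonneg.2 htb)]
      nlinarith [mul_le_mul_of_nonneg_right hab' (sq_nonneg (t + 1))]
  rw [← div_le_iff₀ (by positivity), Real.le_sqrt (by positivity) (by positivity), div_pow,
    div_le_iff₀ (by positivity)]
  linarith

theorem two_pi_le_exp_one_sq : 2 * π ≤ exp 1 ^ 2 := by
  nlinarith [Real.pi_lt_d2, Real.exp_one_gt_d9]

theorem exp_neg_le_of_one_le {t n : ℝ} (ht : 0 < t) (hn : 1 ≤ n) :
    exp (-t) ≤ exp 1 * √n * (t + 1) / (2 * π * t ^ 2) := by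
  have hte : t * exp (-t) * exp 1 ≤ 1 := by
    simpa [← exp_add] using
      mul_le_mul_of_nonneg_right (mul_exp_neg_le_exp_neg_one t) (exp_pos 1).le
  have hsqrt : 1 ≤ √n := Real.one_le_sqrt.2 hn
  rw [le_div_iff₀ (by positivity)]
  calc exp (-t) * (2 * π * t ^ 2) ≤ exp (-t) * (exp 1 ^ 2 * t ^ 2) := by
        gcongr; exact two_pi_le_exp_one_sq
    _ = (t * exp (-t) * exp 1) * (exp 1 * t) := by ring
    _ ≤ 1 * (exp 1 * t) := by gcongr
    _ ≤ exp 1 * √n * (t + 1) := by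
        rw [one_mul, mul_assoc]; gcongr; nlinarith

theorem exp_one_div_mul_one_add_eq {ζ n : ℝ} (hζ : 0 < ζ) (hn : 0 < n) :
    exp 1 / (2 * π * ζ * √n) * (1 + 1 / (ζ * n)) =
      exp 1 * √n * (ζ * n + 1) / (2 * π * (ζ * n) ^ 2) := by
  have hsq : √n ^ 2 = n := Real.sq_sqrt hn.le
  have : 0 < √n := Real.sqrt_pos.2 hn
  field_simp
  rw [hsq]

theorem pow_le_of_le_one_sub {q ζ : ℝ} {n : ℕ} (hq0 : 0 ≤ q) (hq : q ≤ 1 - ζ) (hζ : 0 < ζ)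
    (hn : 1 ≤ n) : q ^ n ≤ exp 1 * √n * (ζ * n + 1) / (2 * π * (ζ * n) ^ 2) := by
  calc q ^ n ≤ exp (-ζ) ^ n := by
        gcongr; linarith [one_sub_le_exp_neg ζ]
    _ = exp (-(ζ * n)) := by rw [← exp_nat_mul]; ring_nf
    _ ≤ _ := exp_neg_le_of_one_le (by positivity) (by exact_mod_cast hn)

theorem binomProb_le_of_sub_one_le {n k : ℕ} {p t : ℝ} (hp0 : 0 ≤ p) (hp1 : p ≤ 1) (hk0 : 0 < k)
    (hkn : k < n) (ht : 0 < t) (htn : 2 * t ≤ n) (hk : t - 1 ≤ k) (hnk : t - 1 ≤ n - k) :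
    binomProb n p k ≤ exp 1 * √n * (t + 1) / (2 * π * t ^ 2) := by
  obtain ⟨b, rfl⟩ : ∃ b, n = k + b := ⟨n - k, by omega⟩
  have hb : 0 < b := by omega
  push_cast at htn hnk ⊢
  have hsq : t ^ 2 ≤ √(k * b) * (t + 1) :=
    sq_le_sqrt_mul_mul_add_one ht htn (by exact_mod_cast hk0) (by exact_mod_cast hb) hk
      (by linarith)
  calc binomProb (k + b) p k
      = ((k + b).choose k : ℝ) * (p ^ k * (1 - p) ^ b) := by
        rw [binomProb, Nat.add_sub_cancel_left, mul_assoc]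
    _ ≤ ((k + b).choose k : ℝ) * ((k / (k + b) : ℝ) ^ k * (b / (k + b) : ℝ) ^ b) :=
        mul_le_mul_of_nonneg_left (pow_mul_one_sub_pow_le hp0 hp1 hk0 hb) (by positivity)
    _ ≤ exp 1 * √(k + b) / (2 * π * √(k * b)) := choose_mul_pow_mul_pow_le hk0 hb
    _ ≤ exp 1 * √(k + b) * (t + 1) / (2 * π * t ^ 2) := by
        rw [div_le_div_iff₀ (by positivity) (by positivity)]
        have : 0 ≤ exp 1 * √(k + b) * (2 * π) := by positivity
        nlinarith [mul_le_mul_of_nonneg_left hsq this]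

theorem stmt6_general (n : ℕ) (hn : 1 ≤ n) (ζ p : ℝ) (hζ0 : 0 < ζ)
    (hpl : ζ ≤ p) (hpu : p ≤ 1 - ζ) (k : ℕ) :
    binomProb n p k ≤
      (Real.exp 1 / (2 * Real.pi * ζ * Real.sqrt n)) * (1 + 1 / (ζ * n)) := by
  have hn0 : (0 : ℝ) < n := by exact_mod_cast hn
  have hp0 : 0 ≤ p := by linarith
  rw [exp_one_div_mul_one_add_eq hζ0 hn0]
  refine (binomProb_le_binomProb_floor hp0 (by linarith) k).trans ?_
  set M := ⌊(n + 1) * p⌋₊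
  have hM : (M : ℝ) ≤ (n + 1) * p := Nat.floor_le (by positivity)
  have hM' : (n + 1) * p < M + 1 := Nat.lt_floor_add_one _
  have hMn : M ≤ n :=
    Nat.lt_succ_iff.mp ((Nat.floor_lt (by positivity)).2 (by push_cast; nlinarith))
  rcases Nat.eq_zero_or_pos M with hM0 | hM0
  · rw [hM0, binomProb_zero_right]
    exact pow_le_of_le_one_sub (by linarith) (by linarith) hζ0 hn
  rcases hMn.eq_or_lt with hMn | hMn
  · rw [hMn, binomProb_self]
    exact pow_le_of_le_one_sub hp0 hpu hζ0 hn
  exact binomProb_le_of_sub_one_le hp0 (by linarith) hM0 hMn (by positivity)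
    (by nlinarith) (by nlinarith) (by nlinarith)

theorem stmt6 (n : ℕ) (hn : 1 ≤ n) (ζ p : ℝ) (hζ0 : 0 < ζ) (hζ : ζ < 1 / 2)
    (hpl : ζ ≤ p) (hpu : p ≤ 1 - ζ) (k : ℕ) :
    binomProb n p k ≤
      (Real.exp 1 / (2 * Real.pi * ζ * Real.sqrt n)) * (1 + 1 / (ζ * n)) :=
  stmt6_general n hn ζ p hζ0 hpl hpu k
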